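/- For every E0 > 0, γ > 0 and μ > 0, the transition system (A)–(B) has at most two solutions (q, ν) with ν > 0 and 0 ≤ q < 1. -/

import Mathlib

open Filter

/-- The unique positive root of `ε² + (E0+4)ε - γ² = 0`. -/
noncomputable def epsPar (E0 γ : ℝ) : ℝ :=
  (-(E0 + 4) + Real.sqrt ((E0 + 4)^2 + 4 * γ^2)) / 2

/-- `E1 = E0 + ε`. -/
noncomputable def E1Par (E0 γ : ℝ) : ℝ := E0 + epsPar E0 γ

/-- `a = 4 + E0 + ε`. -/
noncomputable def aPar (E0 γ : ℝ) : ℝ := 4 + E0 + epsPar E0 γ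

/-- Equation (A) of the transition system:
`(1-q)(1+q) = 12γ⁴ / (ν² (ν+E1) (ν+a+ε)²)`. -/
def EqA (E0 γ q ν : ℝ) : Prop :=
  (1 - q) * (1 + q) =
    12 * γ^4 / (ν^2 * (ν + E1Par E0 γ) * (ν + aPar E0 γ + epsPar E0 γ)^2)

/-- Equation (B) of the transition system:
`(2+q)²/(1+q) = (9/2)(μ/γ²)(ν+a)²(ν+E1)/(ν(ν+a+ε))`. -/
def EqB (E0 γ μ q ν : ℝ) : Prop :=
  (2 + q)^2 / (1 + q) =
    (9/2) * (μ / γ^2) * ((ν + aPar E0 γ)^2 * (ν + E1Par E0 γ)) /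
      (ν * (ν + aPar E0 γ + epsPar E0 γ))


/-! With `u = (1 - q)(1 + q) = 1 - q²` and `0 ≤ q`, we have `q = √(1 - u)`, so (A) reads
`u = rhsA ν` and (B) reads `lhsB (rhsA ν) = rhsB ν`; a solution is thus determined by `ν`.
On `ν > 0`, `rhsA` is convex as a product of nonnegative decreasing convex factors, and `lhsB` is
concave and decreasing on `u ≤ 1`, so `lhsB ∘ rhsA` is concave where `rhsA ≤ 1`. By partial
fractions `rhsB ν = C (ν + const + α / ν + β / (ν + a + ε))` with `C, α > 0` and `β ≥ 0`, so `rhsB`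
is strictly convex. A concave and a strictly convex function of one variable agree at most twice. -/

open Set

theorem Set.encard_le_two_of_forall_lt_lt_false {α : Type*} [LinearOrder α] {s : Set α}
    (h : ∀ x ∈ s, ∀ y ∈ s, ∀ z ∈ s, x < y → y < z → False) : s.encard ≤ 2 := by
  by_contra! hs
  obtain ⟨t, hts, ht⟩ := exists_subset_encard_eq (Order.add_one_le_of_lt hs)
  lift t to Finset α using finite_of_encard_eq_coe ht
  have hcard : t.card = 3 := by exact_mod_cast (encard_coe_eq_coe_finsetCard t).symm.trans ht
  have hmem (i : Fin 3) : t.orderEmbOfFin hcard i ∈ s := hts (t.orderEmbOfFin_mem hcard i)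
  exact h _ (hmem 0) _ (hmem 1) _ (hmem 2) (by simp) (by simp)

theorem StrictConvexOn.encard_setOf_eq_le_two {s : Set ℝ} {f : ℝ → ℝ}
    (hf : StrictConvexOn ℝ s f) (c : ℝ) : {x ∈ s | f x = c}.encard ≤ 2 :=
  Set.encard_le_two_of_forall_lt_lt_false fun x hx y hy z hz hxy hyz => by
    have := hf.slope_strict_mono_adjacent hx.1 hz.1 hxy hyz
    simp [hx.2, hy.2, hz.2] at this

theorem StrictConvexOn.encard_setOf_concaveOn_eq_le_two {s : Set ℝ} {f g : ℝ → ℝ}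
    (hg : StrictConvexOn ℝ s g) (hf : ConcaveOn ℝ s f) : {x ∈ s | f x = g x}.encard ≤ 2 := by
  simpa only [Pi.sub_apply, sub_eq_zero, eq_comm] using
    (hg.sub_concaveOn hf).encard_setOf_eq_le_two 0

theorem StrictConvexOn.const_mul {s : Set ℝ} {f : ℝ → ℝ} {c : ℝ} (hc : 0 < c)
    (hf : StrictConvexOn ℝ s f) : StrictConvexOn ℝ s fun x => c * f x :=
  ⟨hf.1, fun x hx y hy hxy a b ha hb hab => by
    simpa [smul_eq_mul, mul_add, mul_left_comm c] using
      mul_lt_mul_of_pos_left (hf.2 hx hy hxy ha hb hab) hc⟩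

theorem ConcaveOn.comp_convexOn_of_mapsTo {E : Type*} [AddCommMonoid E] [Module ℝ E]
    {s : Set E} {t : Set ℝ} {f : E → ℝ} {g : ℝ → ℝ} (hg : ConcaveOn ℝ t g) (hf : ConvexOn ℝ s f)
    (hg' : AntitoneOn g t) (hst : MapsTo f s t) : ConcaveOn ℝ s (g ∘ f) :=
  ⟨hf.1, fun x hx y hy a b ha hb hab =>
    calc a • g (f x) + b • g (f y) ≤ g (a • f x + b • f y) := hg.2 (hst hx) (hst hy) ha hb hab
      _ ≤ g (f (a • x + b • y)) :=
        hg' (hst (hf.1 hx hy ha hb hab)) (hg.1 (hst hx) (hst hy) ha hb hab) (hf.2 hx hy ha hb hab)⟩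

theorem convexOn_inv_add {c : ℝ} (hc : 0 ≤ c) : ConvexOn ℝ (Ioi 0) fun x => (x + c)⁻¹ := by
  have := ((convexOn_zpow (-1)).translate_right c).subset
    (fun x (hx : x ∈ Ioi 0) => show 0 < c + x by linarith [mem_Ioi.1 hx]) (convex_Ioi 0)
  simpa [Function.comp_def, add_comm] using this

structure ConvexAntitoneNonnegOn (s : Set ℝ) (f : ℝ → ℝ) : Prop where
  convexOn : ConvexOn ℝ s f
  antitoneOn : AntitoneOn f s
  nonneg : ∀ x ∈ s, 0 ≤ f x

theorem ConvexAntitoneNonnegOn.mul {s : Set ℝ} {f g : ℝ → ℝ} (hf : ConvexAntitoneNonnegOn s f)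
    (hg : ConvexAntitoneNonnegOn s g) : ConvexAntitoneNonnegOn s (f * g) where
  convexOn :=
    hf.convexOn.mul hg.convexOn hf.nonneg hg.nonneg (hf.antitoneOn.monovaryOn hg.antitoneOn)
  antitoneOn x hx y hy hxy :=
    mul_le_mul (hf.antitoneOn hx hy hxy) (hg.antitoneOn hx hy hxy) (hg.nonneg y hy) (hf.nonneg x hx)
  nonneg x hx := mul_nonneg (hf.nonneg x hx) (hg.nonneg x hx)

theorem convexAntitoneNonnegOn_inv_add {c : ℝ} (hc : 0 ≤ c) :
    ConvexAntitoneNonnegOn (Ioi 0) fun x => (x + c)⁻¹ :=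
  ⟨convexOn_inv_add hc,
    fun x (hx : 0 < x) y _ hxy => inv_anti₀ (by linarith) (by linarith),
    fun x (hx : 0 < x) => inv_nonneg.2 (by linarith)⟩

theorem convexOn_div_sq_mul_mul_sq (c : ℝ) {b k : ℝ} (hc : 0 ≤ c) (hb : 0 ≤ b) (hk : 0 ≤ k) :
    ConvexOn ℝ (Ioi 0) fun x => c / (x ^ 2 * (x + b) * (x + k) ^ 2) := by
  have h0 := convexAntitoneNonnegOn_inv_add le_rfl
  have hb' := convexAntitoneNonnegOn_inv_add hb
  have hk' := convexAntitoneNonnegOn_inv_add hk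
  refine (((((h0.mul h0).mul hb').mul hk').mul hk').convexOn.smul hc).congr fun x (hx : 0 < x) => ?_
  simp only [Pi.mul_apply, add_zero, smul_eq_mul]
  field_simp

theorem strictConvexOn_mul_sq_mul_div (c : ℝ) {a b k : ℝ} (hc : 0 < c) (ha : a ≠ 0) (hb : 0 < b)
    (hbk : b ≤ k) :
    StrictConvexOn ℝ (Ioi 0) fun x => c * ((x + a) ^ 2 * (x + b)) / (x * (x + k)) := by
  have hk : 0 < k := hb.trans_le hbk
  have hinv : StrictConvexOn ℝ (Ioi 0) fun x : ℝ => (a ^ 2 * b / k) * x⁻¹ := by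
    simpa using (strictConvexOn_zpow (m := -1) (by norm_num) (by norm_num)).const_mul
      (c := a ^ 2 * b / k) (by positivity)
  have hrest : ConvexOn ℝ (Ioi 0) fun x : ℝ =>
      x + (2 * a + b - k) + ((a - k) ^ 2 * (k - b) / k) * (x + k)⁻¹ :=
    ((convexOn_id (convex_Ioi 0)).add (convexOn_const _ (convex_Ioi 0))).add
      ((convexOn_inv_add hk.le).smul (by have := sub_nonneg.2 hbk; positivity))
  refine ((hinv.add_convexOn hrest).const_mul hc).congr fun x (hx : 0 < x) => ?_
  have : x + k ≠ 0 := by positivity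
  simp only [Pi.add_apply]
  field_simp
  ring

noncomputable def lhsB (u : ℝ) : ℝ := (2 + √(1 - u)) ^ 2 / (1 + √(1 - u))

theorem hasDerivAt_lhsB {u : ℝ} (hu : u < 1) :
    HasDerivAt lhsB (-(2 + √(1 - u)) / (2 * (1 + √(1 - u)) ^ 2)) u := by
  have hq : 0 < √(1 - u) := Real.sqrt_pos.2 (by linarith)
  have hsqrt : HasDerivAt (fun u => √(1 - u)) (-1 / (2 * √(1 - u))) u := by
    simpa using ((hasDerivAt_id' u).const_sub 1).sqrt (by linarith)
  refine (((hsqrt.const_add 2).pow 2).div (hsqrt.const_add 1) (by positivity)).congr_deriv ?_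
  simp only [Pi.pow_apply]
  field_simp
  ring

theorem continuous_lhsB : Continuous lhsB := by
  have hsqrt : Continuous fun u : ℝ => √(1 - u) := by fun_prop
  exact ((continuous_const.add hsqrt).pow 2).div (continuous_const.add hsqrt)
    fun u => by positivity

theorem antitoneOn_lhsB : AntitoneOn lhsB (Iic 1) := by
  refine antitoneOn_of_deriv_nonpos (convex_Iic 1) continuous_lhsB.continuousOn
    (fun u hu => (hasDerivAt_lhsB (by simpa using hu)).differentiableAt.differentiableWithinAt)
    fun u hu => ?_
  rw [(hasDerivAt_lhsB (by simpa using hu)).deriv]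
  have := Real.sqrt_nonneg (1 - u)
  exact div_nonpos_of_nonpos_of_nonneg (by linarith) (by positivity)

theorem concaveOn_lhsB : ConcaveOn ℝ (Iic 1) lhsB := by
  refine AntitoneOn.concaveOn_of_deriv (convex_Iic 1) continuous_lhsB.continuousOn
    (fun u hu => (hasDerivAt_lhsB (by simpa using hu)).differentiableAt.differentiableWithinAt)
    fun u hu v hv huv => ?_
  simp only [interior_Iic, mem_Iio] at hu hv
  rw [(hasDerivAt_lhsB hu).deriv, (hasDerivAt_lhsB hv).deriv, neg_div, neg_div, neg_le_neg_iff,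
    div_le_div_iff₀ (by positivity) (by positivity)]
  have hqv := Real.sqrt_nonneg (1 - v)
  have hvu : √(1 - v) ≤ √(1 - u) := Real.sqrt_le_sqrt (by linarith)
  nlinarith [mul_nonneg (sub_nonneg.2 hvu) (mul_nonneg hqv (hqv.trans hvu)),
    mul_nonneg (sub_nonneg.2 hvu) hqv]

theorem epsPar_nonneg (E0 γ : ℝ) : 0 ≤ epsPar E0 γ := by
  have := (le_abs_self (E0 + 4)).trans (Real.abs_le_sqrt (x := E0 + 4)
    (y := (E0 + 4) ^ 2 + 4 * γ ^ 2) (by nlinarith))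
  unfold epsPar
  linarith

noncomputable def rhsA (E0 γ ν : ℝ) : ℝ :=
  12 * γ ^ 4 / (ν ^ 2 * (ν + E1Par E0 γ) * (ν + aPar E0 γ + epsPar E0 γ) ^ 2)

noncomputable def rhsB (E0 γ μ ν : ℝ) : ℝ :=
  (9/2) * (μ / γ ^ 2) * ((ν + aPar E0 γ) ^ 2 * (ν + E1Par E0 γ)) /
    (ν * (ν + aPar E0 γ + epsPar E0 γ))

theorem EqA.rhsA_le_one {E0 γ q ν : ℝ} (hA : EqA E0 γ q ν) : rhsA E0 γ ν ≤ 1 := by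
  rw [rhsA, ← hA]
  nlinarith [sq_nonneg q]

theorem EqA.sqrt_one_sub_rhsA {E0 γ q ν : ℝ} (hA : EqA E0 γ q ν) (hq : 0 ≤ q) :
    √(1 - rhsA E0 γ ν) = q := by
  rw [rhsA, ← hA, show 1 - (1 - q) * (1 + q) = q ^ 2 by ring, Real.sqrt_sq hq]

theorem EqB.lhsB_rhsA {E0 γ μ q ν : ℝ} (hB : EqB E0 γ μ q ν) (hA : EqA E0 γ q ν) (hq : 0 ≤ q) :
    lhsB (rhsA E0 γ ν) = rhsB E0 γ μ ν := by
  rw [lhsB, hA.sqrt_one_sub_rhsA hq]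
  exact hB

/-- the transition system (A)-(B) has at most two solutions `(q, ν)`
with `ν > 0` and `0 ≤ q < 1`. -/
theorem at_most_two_solutions_nonneg_q
    (E0 γ μ : ℝ) (hE0 : 0 < E0) (hγ : 0 < γ) (hμ : 0 < μ) :
    {p : ℝ × ℝ | 0 < p.2 ∧ 0 ≤ p.1 ∧ p.1 < 1 ∧
      EqA E0 γ p.1 p.2 ∧ EqB E0 γ μ p.1 p.2}.encard ≤ 2 := by
  have hε := epsPar_nonneg E0 γ
  have hE1 : 0 < E1Par E0 γ := by unfold E1Par; linarith
  have ha : 0 < aPar E0 γ := by unfold aPar; linarith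
  have hE1a : E1Par E0 γ ≤ aPar E0 γ + epsPar E0 γ := by unfold E1Par aPar; linarith
  have hconvA : ConvexOn ℝ (Ioi 0) (rhsA E0 γ) :=
    (convexOn_div_sq_mul_mul_sq (12 * γ ^ 4) (k := aPar E0 γ + epsPar E0 γ) (by positivity)
      hE1.le (by positivity)).congr fun ν _ => by rw [rhsA, add_assoc]
  have hconvB : StrictConvexOn ℝ (Ioi 0) (rhsB E0 γ μ) :=
    (strictConvexOn_mul_sq_mul_div (9 / 2 * (μ / γ ^ 2)) (by positivity) ha.ne' hE1 hE1a).congr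
      fun ν _ => by rw [rhsB, add_assoc]
  set D := {ν ∈ Ioi (0 : ℝ) | rhsA E0 γ ν ≤ 1}
  have hD : Convex ℝ D := hconvA.convex_le 1
  have hconc : ConcaveOn ℝ D (lhsB ∘ rhsA E0 γ) :=
    concaveOn_lhsB.comp_convexOn_of_mapsTo (hconvA.subset (sep_subset _ _) hD) antitoneOn_lhsB
      fun ν hν => hν.2
  calc _ ≤ ((fun ν => (√(1 - rhsA E0 γ ν), ν)) ''
          {ν ∈ D | (lhsB ∘ rhsA E0 γ) ν = rhsB E0 γ μ ν}).encard := by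
        refine encard_le_encard ?_
        rintro ⟨q, ν⟩ ⟨hν, hq, -, hA, hB⟩
        exact ⟨ν, ⟨⟨hν, hA.rhsA_le_one⟩, hB.lhsB_rhsA hA hq⟩, by simp [hA.sqrt_one_sub_rhsA hq]⟩
    _ ≤ _ := encard_image_le _ _
    _ ≤ 2 := (hconvB.subset (sep_subset _ _) hD).encard_setOf_concaveOn_eq_le_two hconc
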